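/- arXiv:2102.03714 — 4 statements merged into one kernel-verified Lean document; each statement's English description precedes it below -/
import Mathlib

section
/- For every arithmetic function g : ℕ → ℂ, every integer k ≥ 2, and every positive integer n, one has f_{(g,k)}(n) = Σ (μ*g)(a)·τ_k(b), where the sum runs over all pairs (a, b) of positive integers with a^k·b = n. -/
/-!
Möbius inversion writes `g = (μ * g) * 1`, so `g (gcd d) = ∑_{e ∣ gcd d} (μ * g)(e)`. Exchanging
the sums, `(μ * g)(e)` is counted once for each `k`-tuple with product `n` all of whose entries are
divisible by `e`; dividing every entry by `e` identifies these tuples with the `k`-tuples of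
product `n / e ^ k`, of which there are `τ_k (n / e ^ k)` when `e ^ k ∣ n` and none otherwise.
-/

open Finset ArithmeticFunction

/-- The set of ordered `k`-tuples of positive integers whose product is `n`. -/
def piltzTuples (k n : ℕ) : Finset (Fin k → ℕ) :=
  (Fintype.piFinset fun _ => n.divisors).filter fun d => ∏ i, d i = n

/-- The Piltz divisor function `τ_k(n)`: the number of ordered `k`-tuples of positive
integers with product `n`. -/
def piltzTau (k n : ℕ) : ℕ := (piltzTuples k n).card

/-- `f_{(g,k)}(n) = ∑_{d₁⋯d_k = n} g(gcd(d₁,…,d_k))`. -/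
noncomputable def fgk (g : ℕ → ℂ) (k n : ℕ) : ℂ :=
  ∑ d ∈ piltzTuples k n, g (Finset.univ.gcd d)

/-- Dirichlet convolution of two arithmetic functions. -/
noncomputable def dirichletConv (f g : ℕ → ℂ) (n : ℕ) : ℂ :=
  ∑ d ∈ n.divisors, f d * g (n / d)

variable {k n : ℕ}

lemma mem_piltzTuples_iff (hn : n ≠ 0) {d : Fin k → ℕ} :
    d ∈ piltzTuples k n ↔ ∏ i, d i = n := by
  simp only [piltzTuples, mem_filter, Fintype.mem_piFinset, Nat.mem_divisors]
  exact ⟨fun h => h.2, fun h => ⟨fun i => ⟨h ▸ dvd_prod_of_mem d (mem_univ i), hn⟩, h⟩⟩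

lemma gcd_mem_divisors_of_mem_piltzTuples (hk : k ≠ 0) {d : Fin k → ℕ}
    (hd : d ∈ piltzTuples k n) : univ.gcd d ∈ n.divisors := by
  have i₀ : Fin k := ⟨0, Nat.pos_of_ne_zero hk⟩
  have hd₀ : d i₀ ∈ n.divisors := Fintype.mem_piFinset.mp (mem_filter.mp hd).1 i₀
  rw [Nat.mem_divisors] at hd₀ ⊢
  exact ⟨(gcd_dvd (mem_univ i₀)).trans hd₀.1, hd₀.2⟩

lemma piltzTuples_pow_mul_filter_forall_dvd {e m : ℕ} (he : e ≠ 0) (hm : m ≠ 0) :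
    {d ∈ piltzTuples k (e ^ k * m) | ∀ i, e ∣ d i} =
      (piltzTuples k m).map ⟨(e • ·), smul_right_injective _ he⟩ := by
  have hem : e ^ k * m ≠ 0 := mul_ne_zero (pow_ne_zero _ he) hm
  have prod_smul (c : Fin k → ℕ) : ∏ i, (e • c) i = e ^ k * ∏ i, c i := by
    simp [← pow_card_mul_prod]
  ext d
  simp only [mem_filter, mem_map, Function.Embedding.coeFn_mk, mem_piltzTuples_iff hem,
    mem_piltzTuples_iff hm]
  constructor
  · rintro ⟨hprod, hdvd⟩
    have hd : e • (fun i => d i / e) = d := funext fun i => Nat.mul_div_cancel' (hdvd i)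
    refine ⟨fun i => d i / e, ?_, hd⟩
    rw [← hd, prod_smul] at hprod
    exact Nat.eq_of_mul_eq_mul_left (Nat.pos_of_ne_zero (pow_ne_zero _ he)) hprod
  · rintro ⟨c, rfl, rfl⟩
    exact ⟨prod_smul c, fun i => dvd_mul_right e (c i)⟩

lemma card_piltzTuples_filter_forall_dvd (hn : n ≠ 0) {e : ℕ} (he : e ≠ 0) :
    #{d ∈ piltzTuples k n | ∀ i, e ∣ d i} = if e ^ k ∣ n then piltzTau k (n / e ^ k) else 0 := by
  split_ifs with hek
  · obtain ⟨m, rfl⟩ := hek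
    rw [Nat.mul_div_cancel_left _ (Nat.pos_of_ne_zero (pow_ne_zero _ he)),
      piltzTuples_pow_mul_filter_forall_dvd he (right_ne_zero_of_mul hn), card_map, piltzTau]
  · refine card_eq_zero.mpr (filter_eq_empty_iff.mpr fun d hd hdvd => hek ?_)
    rw [← (mem_piltzTuples_iff hn).mp hd]
    simpa using prod_dvd_prod_of_dvd (s := univ) (fun _ => e) d fun i _ => hdvd i

lemma sum_divisors_dirichletConv_moebius (g : ℕ → ℂ) {m : ℕ} (hm : m ≠ 0) :
    ∑ e ∈ m.divisors, dirichletConv (fun d => ((moebius d : ℤ) : ℂ)) g e = g m := by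
  refine (sum_eq_iff_sum_mul_moebius_eq.mpr (fun t _ => ?_)) m (Nat.pos_of_ne_zero hm)
  rw [Nat.sum_divisorsAntidiagonal fun a b => ((moebius a : ℤ) : ℂ) * g b]
  rfl

lemma sum_divisors_filter_pow_dvd {M : Type*} [AddCommMonoid M] (f : ℕ → ℕ → M) :
    ∑ a ∈ n.divisors with a ^ k ∣ n, f a (n / a ^ k) =
      ∑ p ∈ (n.divisors ×ˢ n.divisors).filter fun p => p.1 ^ k * p.2 = n, f p.1 p.2 := by
  refine sum_nbij' (fun a => (a, n / a ^ k)) Prod.fst ?_ ?_ (fun _ _ => rfl) ?_ (fun _ _ => rfl)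
  · simp only [mem_filter, mem_product, Nat.mem_divisors]
    rintro a ⟨⟨ha, hn⟩, hak⟩
    exact ⟨⟨⟨ha, hn⟩, Nat.div_dvd_of_dvd hak, hn⟩, Nat.mul_div_cancel' hak⟩
  · simp only [mem_filter, mem_product, Nat.mem_divisors]
    rintro p ⟨⟨⟨hp, hn⟩, -⟩, hpk⟩
    exact ⟨⟨hp, hn⟩, p.2, hpk.symm⟩
  · simp only [mem_filter, mem_product, Nat.mem_divisors]
    rintro ⟨a, b⟩ ⟨⟨-, -, hn⟩, rfl⟩
    have ha : a ^ k ≠ 0 := left_ne_zero_of_mul hn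
    simp [Nat.mul_div_cancel_left b (Nat.pos_of_ne_zero ha)]

lemma sum_piltzTuples_sum_divisors_gcd {M : Type*} [AddCommMonoid M] (hk : k ≠ 0) (f : ℕ → M) :
    ∑ d ∈ piltzTuples k n, ∑ e ∈ (univ.gcd d).divisors, f e =
      ∑ e ∈ n.divisors, #{d ∈ piltzTuples k n | ∀ i, e ∣ d i} • f e := by
  simp_rw [← sum_const]
  refine sum_comm' fun d e => ⟨fun ⟨hd, he⟩ => ?_, fun ⟨hd, _⟩ => ?_⟩
  · have hgcd := Nat.mem_divisors.mp (gcd_mem_divisors_of_mem_piltzTuples hk hd)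
    have he := (Nat.mem_divisors.mp he).1
    exact ⟨mem_filter.mpr ⟨hd, fun i => he.trans (gcd_dvd (mem_univ i))⟩,
      Nat.mem_divisors.mpr ⟨he.trans hgcd.1, hgcd.2⟩⟩
  · obtain ⟨hd, hdvd⟩ := mem_filter.mp hd
    have hgcd := gcd_mem_divisors_of_mem_piltzTuples hk hd
    exact ⟨hd, Nat.mem_divisors.mpr ⟨dvd_gcd_iff.mpr fun i _ => hdvd i,
      (Nat.pos_of_mem_divisors hgcd).ne'⟩⟩

theorem stmt6_general (g : ℕ → ℂ) (k : ℕ) (hk : 2 ≤ k) (n : ℕ) :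
    fgk g k n =
      ∑ p ∈ (n.divisors ×ˢ n.divisors).filter fun p => p.1 ^ k * p.2 = n,
        dirichletConv (fun d => ((moebius d : ℤ) : ℂ)) g p.1 * (piltzTau k p.2 : ℂ) := by
  set h := dirichletConv (fun d => ((moebius d : ℤ) : ℂ)) g
  have hk₀ : k ≠ 0 := by omega
  calc fgk g k n = ∑ d ∈ piltzTuples k n, ∑ e ∈ (univ.gcd d).divisors, h e :=
        sum_congr rfl fun d hd => (sum_divisors_dirichletConv_moebius g
          (Nat.pos_of_mem_divisors (gcd_mem_divisors_of_mem_piltzTuples hk₀ hd)).ne').symm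
    _ = ∑ e ∈ n.divisors, #{d ∈ piltzTuples k n | ∀ i, e ∣ d i} • h e :=
        sum_piltzTuples_sum_divisors_gcd hk₀ h
    _ = ∑ e ∈ n.divisors with e ^ k ∣ n, h e * (piltzTau k (n / e ^ k) : ℂ) := by
        rw [sum_filter]
        refine sum_congr rfl fun e he => ?_
        obtain ⟨he, hn⟩ := Nat.mem_divisors.mp he
        rw [card_piltzTuples_filter_forall_dvd hn (ne_zero_of_dvd_ne_zero hn he)]
        split_ifs <;> simp [mul_comm]
    _ = _ := sum_divisors_filter_pow_dvd fun a b => h a * (piltzTau k b : ℂ)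

theorem stmt6 (g : ℕ → ℂ) (k : ℕ) (hk : 2 ≤ k) (n : ℕ) (hn : 0 < n) :
    fgk g k n =
      ∑ p ∈ (n.divisors ×ˢ n.divisors).filter fun p => p.1 ^ k * p.2 = n,
        dirichletConv (fun d => ((moebius d : ℤ) : ℂ)) g p.1 * (piltzTau k p.2 : ℂ) :=
  stmt6_general g k hk n
end

section
/- For every integer k ≥ 2 and every positive integer n, one has f_{(id,k)}(n) = Σ φ(a)·τ_k(b), where the sum runs over all pairs (a, b) of positive integers with a^k·b = n, and φ is Euler's totient function. -/
open Finset

/-- `f_{(g,k)}(n) = ∑_{d₁⋯d_k = n} g(gcd(d₁,…,d_k))` (ℕ-valued version). -/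
def fgkNat (g : ℕ → ℕ) (k n : ℕ) : ℕ :=
  ∑ d ∈ piltzTuples k n, g (Finset.univ.gcd d)

/-!
Writing `gcd(d) = ∑_{a ∣ gcd(d)} φ(a)` and exchanging the sums gives
`f_{(id,k)}(n) = ∑_{a ∣ n} φ(a) · #{d : d₁⋯d_k = n, a ∣ dᵢ for all i}`.
The tuples counted for `a` are exactly `a · e` with `e₁⋯e_k = n / a^k`, so the count is
`τ_k(n / a^k)` when `a^k ∣ n` and `0` otherwise.
-/

variable {k n : ℕ} {d : Fin k → ℕ}

lemma mem_piltzTuples : d ∈ piltzTuples k n ↔ ∏ i, d i = n ∧ n ≠ 0 := by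
  simp only [piltzTuples, mem_filter, Fintype.mem_piFinset, Nat.mem_divisors]
  constructor
  · rintro ⟨hdiv, rfl⟩
    refine ⟨rfl, fun h0 => ?_⟩
    obtain ⟨i, -, -⟩ := prod_eq_zero_iff.mp h0
    exact (hdiv i).2 h0
  · rintro ⟨rfl, hn⟩
    exact ⟨fun i => ⟨dvd_prod_of_mem d (mem_univ i), hn⟩, rfl⟩

lemma gcd_dvd_of_mem_piltzTuples (hk : k ≠ 0) (hd : d ∈ piltzTuples k n) :
    univ.gcd d ∣ n := by
  let i : Fin k := ⟨0, Nat.pos_of_ne_zero hk⟩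
  rw [← (mem_piltzTuples.mp hd).1]
  exact (gcd_dvd (mem_univ i)).trans (dvd_prod_of_mem d (mem_univ i))

lemma pow_dvd_of_mem_piltzTuples {a : ℕ} (hd : d ∈ piltzTuples k n) (ha : ∀ i, a ∣ d i) :
    a ^ k ∣ n := by
  calc a ^ k = ∏ _i : Fin k, a := by simp
    _ ∣ ∏ i, d i := prod_dvd_prod_of_dvd _ _ fun i _ => ha i
    _ = n := (mem_piltzTuples.mp hd).1

lemma card_filter_dvd_piltzTuples {a b : ℕ} (ha : a ≠ 0) (hab : a ^ k * b = n) :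
    #{d ∈ piltzTuples k n | ∀ i, a ∣ d i} = piltzTau k b := by
  have hprod (e : Fin k → ℕ) : ∏ i, a * e i = a ^ k * ∏ i, e i := by
    rw [prod_mul_distrib, prod_const, card_univ, Fintype.card_fin]
  have hnb : n ≠ 0 ↔ b ≠ 0 := by
    rw [← hab, mul_ne_zero_iff, and_iff_right (pow_ne_zero k ha)]
  refine card_bij' (fun d _ i => d i / a) (fun e _ i => a * e i) ?_ ?_ ?_ ?_
  · intro d hd
    rw [mem_filter, mem_piltzTuples] at hd
    obtain ⟨⟨hprod_d, hn⟩, hdvd⟩ := hd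
    refine mem_piltzTuples.mpr ⟨Nat.eq_of_mul_eq_mul_left (pow_pos (Nat.pos_of_ne_zero ha) k) ?_,
      hnb.mp hn⟩
    rw [← hprod, hab, ← hprod_d]
    exact prod_congr rfl fun i _ => Nat.mul_div_cancel' (hdvd i)
  · intro e he
    obtain ⟨hprod_e, hb⟩ := mem_piltzTuples.mp he
    exact mem_filter.mpr ⟨mem_piltzTuples.mpr ⟨by rw [hprod, hprod_e, hab], hnb.mpr hb⟩,
      fun i => dvd_mul_right a (e i)⟩
  · intro d hd
    funext i
    exact Nat.mul_div_cancel' ((mem_filter.mp hd).2 i)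
  · intro e _
    funext i
    exact Nat.mul_div_cancel_left _ (Nat.pos_of_ne_zero ha)

lemma fgkNat_id_eq_sum_totient_mul_card (hk : k ≠ 0) :
    fgkNat (fun m => m) k n =
      ∑ a ∈ n.divisors, a.totient * #{d ∈ piltzTuples k n | ∀ i, a ∣ d i} := by
  have hswap : ∀ d a, d ∈ piltzTuples k n ∧ a ∈ (univ.gcd d).divisors ↔
      d ∈ {d ∈ piltzTuples k n | ∀ i, a ∣ d i} ∧ a ∈ n.divisors := by
    intro d a
    simp only [Nat.mem_divisors, mem_filter, Finset.dvd_gcd_iff, mem_univ, true_implies]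
    constructor
    · rintro ⟨hd, ha, -⟩
      exact ⟨⟨hd, ha⟩, (Finset.dvd_gcd_iff.mpr fun i _ => ha i).trans
        (gcd_dvd_of_mem_piltzTuples hk hd), (mem_piltzTuples.mp hd).2⟩
    · rintro ⟨⟨hd, ha⟩, -, hn⟩
      exact ⟨hd, ha, ne_zero_of_dvd_ne_zero hn (gcd_dvd_of_mem_piltzTuples hk hd)⟩
  calc fgkNat (fun m => m) k n
      = ∑ d ∈ piltzTuples k n, ∑ a ∈ (univ.gcd d).divisors, a.totient :=
        sum_congr rfl fun d _ => (Nat.sum_totient _).symm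
    _ = ∑ a ∈ n.divisors, ∑ _d ∈ {d ∈ piltzTuples k n | ∀ i, a ∣ d i}, a.totient :=
        sum_comm' hswap
    _ = _ := by simp only [sum_const, smul_eq_mul, mul_comm]

lemma sum_filter_pow_mul_eq_sum_div {M : Type*} [AddCommMonoid M] (f : ℕ → ℕ → M) :
    ∑ p ∈ (n.divisors ×ˢ n.divisors).filter (fun p => p.1 ^ k * p.2 = n), f p.1 p.2 =
      ∑ a ∈ n.divisors with a ^ k ∣ n, f a (n / a ^ k) := by
  have hsnd {p : ℕ × ℕ} (hp : p ∈ (n.divisors ×ˢ n.divisors).filter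
      (fun p => p.1 ^ k * p.2 = n)) : n / p.1 ^ k = p.2 := by
    simp only [mem_filter, mem_product, Nat.mem_divisors] at hp
    exact Nat.div_eq_of_eq_mul_right (pow_pos (Nat.pos_of_ne_zero (ne_zero_of_dvd_ne_zero
      hp.1.1.2 hp.1.1.1)) k) hp.2.symm
  refine sum_nbij' Prod.fst (fun a => (a, n / a ^ k)) ?_ ?_ (fun p hp => by rw [hsnd hp])
    (fun _ _ => rfl) (fun p hp => by rw [hsnd hp])
  · intro p hp
    simp only [mem_filter, mem_product, Nat.mem_divisors] at hp ⊢
    exact ⟨hp.1.1, Dvd.intro _ hp.2⟩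
  · intro a ha
    simp only [mem_filter, mem_product, Nat.mem_divisors] at ha ⊢
    exact ⟨⟨ha.1, Nat.div_dvd_of_dvd ha.2, ha.1.2⟩, Nat.mul_div_cancel' ha.2⟩

theorem stmt7_general (k : ℕ) (hk : 2 ≤ k) (n : ℕ) :
    fgkNat (fun m => m) k n =
      ∑ p ∈ (n.divisors ×ˢ n.divisors).filter fun p => p.1 ^ k * p.2 = n,
        Nat.totient p.1 * piltzTau k p.2 := by
  have hk0 : k ≠ 0 := by omega
  calc fgkNat (fun m => m) k n
      = ∑ a ∈ n.divisors, a.totient * #{d ∈ piltzTuples k n | ∀ i, a ∣ d i} :=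
        fgkNat_id_eq_sum_totient_mul_card hk0
    _ = ∑ a ∈ n.divisors with a ^ k ∣ n, a.totient * #{d ∈ piltzTuples k n | ∀ i, a ∣ d i} := by
        refine (sum_filter_of_ne fun a _ h => ?_).symm
        obtain ⟨d, hd⟩ := card_pos.mp (Nat.pos_of_ne_zero (right_ne_zero_of_mul h))
        exact pow_dvd_of_mem_piltzTuples (mem_filter.mp hd).1 (mem_filter.mp hd).2
    _ = ∑ a ∈ n.divisors with a ^ k ∣ n, a.totient * piltzTau k (n / a ^ k) := by
        refine sum_congr rfl fun a ha => ?_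
        obtain ⟨⟨hadvd, hn⟩, hpow⟩ := by simpa only [mem_filter, Nat.mem_divisors] using ha
        rw [card_filter_dvd_piltzTuples (ne_zero_of_dvd_ne_zero hn hadvd)
          (Nat.mul_div_cancel' hpow)]
    _ = _ := (sum_filter_pow_mul_eq_sum_div fun a b => a.totient * piltzTau k b).symm

theorem stmt7 (k : ℕ) (hk : 2 ≤ k) (n : ℕ) (hn : 0 < n) :
    fgkNat (fun m => m) k n =
      ∑ p ∈ (n.divisors ×ˢ n.divisors).filter fun p => p.1 ^ k * p.2 = n,
        Nat.totient p.1 * piltzTau k p.2 :=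
  stmt7_general k hk n
end

section
/- For every integer k ≥ 2 and every positive integer n, one has f_{(σ,k)}(n) = Σ a·τ_k(b), where the sum runs over all pairs (a, b) of positive integers with a^k·b = n, and σ is the sum-of-divisors function. -/
open Finset

/-!
Since `σ = 1 * id`, `σ(gcd(d₁,…,d_k))` is the sum of the common divisors `a` of the `dᵢ`.
Exchanging the two sums, each `a` is counted once for every `k`-tuple of product `n` all of
whose entries are multiples of `a`; dividing every entry by `a` identifies these tuples with
the `k`-tuples of product `n / a^k`, of which there are `τ_k(n / a^k)`.
-/

namespace piltzTuples

variable {k n : ℕ}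

lemma prod_eq {d : Fin k → ℕ} (hd : d ∈ piltzTuples k n) : ∏ i, d i = n :=
  (mem_filter.1 hd).2

lemma mem_iff (hn : n ≠ 0) {d : Fin k → ℕ} : d ∈ piltzTuples k n ↔ ∏ i, d i = n := by
  refine ⟨prod_eq, fun h => mem_filter.2 ⟨Fintype.mem_piFinset.2 fun i => ?_, h⟩⟩
  exact Nat.mem_divisors.2 ⟨h ▸ dvd_prod_of_mem d (mem_univ i), hn⟩

lemma pow_dvd_of_forall_dvd {a : ℕ} {d : Fin k → ℕ} (hd : d ∈ piltzTuples k n)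
    (ha : ∀ i, a ∣ d i) : a ^ k ∣ n := by
  have := prod_dvd_prod_of_dvd (s := univ) (fun _ => a) d fun i _ => ha i
  rwa [Fin.prod_const, prod_eq hd] at this

lemma divisors_gcd (hk : k ≠ 0) (hn : n ≠ 0) {d : Fin k → ℕ} (hd : d ∈ piltzTuples k n) :
    (univ.gcd d).divisors = n.divisors.filter fun a => ∀ i, a ∣ d i := by
  have i₀ : Fin k := ⟨0, Nat.pos_of_ne_zero hk⟩
  have hgcd : univ.gcd d ≠ 0 := fun h =>
    hn (prod_eq hd ▸ prod_eq_zero (mem_univ i₀) (gcd_eq_zero_iff.1 h i₀ (mem_univ i₀)))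
  ext a
  simp only [Nat.mem_divisors, mem_filter, Finset.dvd_gcd_iff, mem_univ, true_implies, hgcd,
    hn, and_true, ne_eq, not_false_eq_true]
  exact ⟨fun h => ⟨(h i₀).trans (prod_eq hd ▸ dvd_prod_of_mem d (mem_univ i₀)), h⟩, And.right⟩

lemma card_filter_forall_dvd (hn : n ≠ 0) {a : ℕ} (ha : a ≠ 0) (hak : a ^ k ∣ n) :
    #{d ∈ piltzTuples k n | ∀ i, a ∣ d i} = piltzTau k (n / a ^ k) := by
  have hnak : n / a ^ k ≠ 0 := (Nat.div_ne_zero_iff_of_dvd hak).2 ⟨hn, pow_ne_zero k ha⟩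
  refine card_nbij' (fun d i => d i / a) (fun e i => a * e i) ?_ ?_ ?_ ?_
  · intro d hd
    obtain ⟨hd, hdvd⟩ := mem_filter.1 hd
    have : n = a ^ k * ∏ i, d i / a := by
      rw [← prod_eq hd, ← Fin.prod_const, ← prod_mul_distrib]
      exact prod_congr rfl fun i _ => (Nat.mul_div_cancel' (hdvd i)).symm
    rw [mem_coe, mem_iff hnak, this, Nat.mul_div_cancel_left _ (by positivity)]
  · intro e he
    refine mem_filter.2 ⟨(mem_iff hn).2 ?_, fun i => dvd_mul_right a (e i)⟩
    rw [prod_mul_distrib, prod_eq he, Fin.prod_const, Nat.mul_div_cancel' hak]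
  · intro d hd
    funext i
    exact Nat.mul_div_cancel' ((mem_filter.1 hd).2 i)
  · intro e _
    funext i
    exact Nat.mul_div_cancel_left _ (Nat.pos_of_ne_zero ha)

end piltzTuples

lemma fgkNat_sum_divisors (g : ℕ → ℕ) {k n : ℕ} (hk : k ≠ 0) (hn : n ≠ 0) :
    fgkNat (fun m => ∑ e ∈ m.divisors, g e) k n =
      ∑ a ∈ n.divisors with a ^ k ∣ n, g a * piltzTau k (n / a ^ k) := by
  calc fgkNat (fun m => ∑ e ∈ m.divisors, g e) k n
      = ∑ d ∈ piltzTuples k n, ∑ a ∈ n.divisors with ∀ i, a ∣ d i, g a :=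
        sum_congr rfl fun d hd => by simp only [piltzTuples.divisors_gcd hk hn hd]
    _ = ∑ a ∈ n.divisors, ∑ d ∈ piltzTuples k n with ∀ i, a ∣ d i, g a :=
        sum_comm' fun _ _ => by simp only [mem_filter]; tauto
    _ = ∑ a ∈ n.divisors, if a ^ k ∣ n then g a * piltzTau k (n / a ^ k) else 0 := by
        refine sum_congr rfl fun a ha => ?_
        rw [sum_const, smul_eq_mul, mul_comm]
        split_ifs with hak
        · rw [piltzTuples.card_filter_forall_dvd hn (Nat.ne_of_gt (Nat.pos_of_mem_divisors ha))
            hak]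
        · rw [filter_false_of_mem fun d hd hdvd => hak (piltzTuples.pow_dvd_of_forall_dvd hd hdvd),
            card_empty, mul_zero]
    _ = _ := (sum_filter _ _).symm

lemma sum_filter_pow_mul_eq_sum_filter_pow_dvd {M : Type*} [AddCommMonoid M] (f : ℕ → ℕ → M)
    {k n : ℕ} (hn : n ≠ 0) :
    ∑ p ∈ (n.divisors ×ˢ n.divisors).filter (fun p => p.1 ^ k * p.2 = n), f p.1 p.2 =
      ∑ a ∈ n.divisors with a ^ k ∣ n, f a (n / a ^ k) := by
  have hpow {p : ℕ × ℕ} (hp : p.1 ^ k * p.2 = n) : n / p.1 ^ k = p.2 :=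
    hp ▸ Nat.mul_div_cancel_left _ (Nat.pos_of_ne_zero (left_ne_zero_of_mul (hp ▸ hn)))
  refine sum_nbij' Prod.fst (fun a => (a, n / a ^ k)) ?_ ?_ ?_ ?_ ?_
  · intro p hp
    simp only [mem_filter, mem_product] at hp ⊢
    exact ⟨hp.1.1, Dvd.intro _ hp.2⟩
  · intro a ha
    simp only [mem_filter, mem_product] at ha ⊢
    exact ⟨⟨ha.1, Nat.mem_divisors.2 ⟨Nat.div_dvd_of_dvd ha.2, hn⟩⟩, Nat.mul_div_cancel' ha.2⟩
  · intro p hp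
    simp only [mem_filter, mem_product] at hp
    exact Prod.ext rfl (hpow hp.2)
  · exact fun _ _ => rfl
  · intro p hp
    rw [hpow (mem_filter.1 hp).2]

theorem stmt8 (k : ℕ) (hk : 2 ≤ k) (n : ℕ) (hn : 0 < n) :
    fgkNat (fun m => ∑ d ∈ m.divisors, d) k n =
      ∑ p ∈ (n.divisors ×ˢ n.divisors).filter fun p => p.1 ^ k * p.2 = n,
        p.1 * piltzTau k p.2 := by
  rw [sum_filter_pow_mul_eq_sum_filter_pow_dvd (fun a b => a * piltzTau k b) hn.ne']
  exact fgkNat_sum_divisors (fun e => e) (by omega) hn.ne'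
end

section
/- For every integer k ≥ 2 and every real s > 1, the Dirichlet series Σ_{n=1}^∞ f_{(id,k)}(n)/n^s converges and equals ζ(s)^k·ζ(ks − 1)/ζ(ks). -/
open Finset

/-!
Gauss's identity `gcd d = ∑_{e ∣ gcd d} φ e`, summed over the tuples `d` with product `n`, gives
`f_{(id,k)}(n) = ∑_{e^k m = n} φ(e) τ_k(m)`, because the tuples all of whose entries are divisible
by `e` are `e` times the tuples with product `n / e^k`. So `f_{(id,k)}` is the Dirichlet convolution
of `τ_k` with the function carrying `φ(e)` at `e^k` and vanishing off the `k`-th powers. The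
Dirichlet series of the first is `ζ(s)^k`; that of the second is `∑ φ(e) e^{-ks} = ζ(ks-1)/ζ(ks)`,
since `φ ⋆ 1 = id`.
-/

open LSeries Function
open scoped Nat LSeries.notation

lemma LSeries.term_extend_pow {k : ℕ} (hk : k ≠ 0) (f : ℕ → ℂ) (s : ℂ) :
    term (extend (· ^ k) f 0) s = extend (· ^ k) (term f (k * s)) 0 := by
  funext n
  by_cases hn : ∃ e, e ^ k = n
  · obtain ⟨e, rfl⟩ := hn
    rw [(Nat.pow_left_injective hk).extend_apply]
    rcases eq_or_ne e 0 with rfl | he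
    · simp [zero_pow hk]
    · rw [term_of_ne_zero (pow_ne_zero k he), term_of_ne_zero he,
        (Nat.pow_left_injective hk).extend_apply, Nat.cast_pow, Complex.natCast_cpow_natCast_mul]
  · simp [term_def, extend_apply' _ _ _ hn]

lemma LSeriesHasSum.extend_pow {k : ℕ} (hk : k ≠ 0) {f : ℕ → ℂ} {s a : ℂ}
    (hf : LSeriesHasSum f (k * s) a) : LSeriesHasSum (extend (· ^ k) f 0) s a := by
  rw [LSeriesHasSum, term_extend_pow hk, hasSum_extend_zero (Nat.pow_left_injective hk)]
  exact hf

lemma LSeriesHasSum_delta (s : ℂ) : LSeriesHasSum δ s 1 := by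
  rw [LSeriesHasSum, funext (term_delta s)]
  exact hasSum_ite_eq 1 1

lemma LSeriesHasSum_natCast {s : ℂ} (hs : 2 < s.re) :
    LSeriesHasSum (fun n ↦ (n : ℂ)) s (riemannZeta (s - 1)) := by
  have hterm : term (fun n ↦ (n : ℂ)) s = term 1 (s - 1) := by
    funext n
    rcases eq_or_ne n 0 with rfl | hn
    · simp
    · have hn' : (n : ℂ) ≠ 0 := Nat.cast_ne_zero.mpr hn
      rw [term_of_ne_zero hn, term_of_ne_zero hn, Complex.cpow_sub _ _ hn', Complex.cpow_one]
      field_simp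
      simp
  rw [LSeriesHasSum, hterm]
  exact LSeriesHasSum_one (by rw [Complex.sub_re, Complex.one_re]; linarith)

lemma convolution_totient_one : (fun n ↦ (φ n : ℂ)) ⍟ 1 = fun n : ℕ ↦ (n : ℂ) := by
  funext n
  rw [convolution_def]
  simp only [Pi.one_apply, mul_one]
  rw [Nat.sum_divisorsAntidiagonal (fun a (_ : ℕ) ↦ (φ a : ℂ)), ← Nat.cast_sum, Nat.sum_totient]

lemma LSeriesHasSum_totient {s : ℂ} (hs : 2 < s.re) :
    LSeriesHasSum (fun n ↦ (φ n : ℂ)) s (riemannZeta (s - 1) / riemannZeta s) := by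
  have hs1 : 1 < s.re := by linarith
  have hsum : LSeriesSummable (fun n ↦ (φ n : ℂ)) s :=
    LSeriesSummable_of_le_const_mul_rpow (x := 2) hs ⟨1, fun n _ ↦ by
      norm_num [Nat.totient_le]⟩
  have hprod := hsum.LSeriesHasSum.convolution (LSeriesHasSum_one hs1)
  rw [convolution_totient_one] at hprod
  rw [← eq_div_of_mul_eq (riemannZeta_ne_zero_of_one_lt_re hs1)
    (hprod.unique (LSeriesHasSum_natCast hs))]
  exact hsum.LSeriesHasSum

namespace Nat

lemma card_finMulAntidiag_zero_eq_delta : (fun n ↦ (#(finMulAntidiag 0 n) : ℂ)) = δ := by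
  funext n
  by_cases hn : n = 1
  · simp [hn, finMulAntidiag_one, LSeries.delta]
  · simp [hn, finMulAntidiag_zero_left, LSeries.delta]

lemma card_finMulAntidiag_succ (k n : ℕ) :
    #(finMulAntidiag (k + 1) n) = ∑ p ∈ n.divisorsAntidiagonal, #(finMulAntidiag k p.1) := by
  rw [card_eq_sum_card_fiberwise (t := n.divisorsAntidiagonal)
    (f := fun d ↦ (∏ i : Fin k, d i.castSucc, d (Fin.last k))) fun d hd ↦ by
      rw [mem_coe, mem_finMulAntidiag] at hd
      rw [mem_coe, mem_divisorsAntidiagonal, ← Fin.prod_univ_castSucc]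
      exact hd]
  refine sum_congr rfl fun p hp ↦ ?_
  obtain ⟨hp, hn⟩ := mem_divisorsAntidiagonal.mp hp
  refine card_nbij' Fin.init (Fin.snoc · p.2) (fun d hd ↦ ?_) (fun c hc ↦ ?_)
    (fun d hd ↦ ?_) (fun c _ ↦ Fin.init_snoc _ _)
  · simp only [coe_filter, Set.mem_ofPred_eq, mem_finMulAntidiag, Prod.ext_iff] at hd
    simp only [mem_coe, mem_finMulAntidiag]
    exact ⟨hd.2.1, left_ne_zero_of_mul (hp ▸ hn)⟩
  · simp only [mem_coe, mem_finMulAntidiag] at hc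
    simp [Fin.prod_univ_castSucc, hc.1, hp, hn]
  · simp only [coe_filter, Set.mem_ofPred_eq, Prod.ext_iff] at hd
    rw [← hd.2.2]
    exact Fin.snoc_init_self d

lemma card_filter_dvd_finMulAntidiag {k n e : ℕ} (he : e ≠ 0) :
    #{d ∈ finMulAntidiag k n | ∀ i, e ∣ d i}
      = if e ^ k ∣ n then #(finMulAntidiag k (n / e ^ k)) else 0 := by
  rcases eq_or_ne n 0 with rfl | hn
  · simp
  split_ifs with hdvd
  · have hq : n / e ^ k ≠ 0 := (Nat.div_ne_zero_iff_of_dvd hdvd).mpr ⟨hn, pow_ne_zero k he⟩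
    refine card_nbij' (fun d i ↦ d i / e) (fun c i ↦ e * c i) (fun d hd ↦ ?_) (fun c hc ↦ ?_)
      (fun d hd ↦ ?_) (fun c _ ↦ funext fun i ↦ Nat.mul_div_cancel_left _ (pos_of_ne_zero he))
    · simp only [coe_filter, mem_finMulAntidiag, Set.mem_ofPred_eq] at hd
      refine mem_finMulAntidiag.mpr ⟨?_, hq⟩
      rw [← hd.1.1, ← prod_congr rfl fun i _ ↦ Nat.mul_div_cancel' (hd.2 i), ← pow_card_mul_prod,
        Finset.card_fin, Nat.mul_div_cancel_left _ (pos_of_ne_zero (pow_ne_zero k he))]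
    · simp only [mem_coe, mem_finMulAntidiag] at hc
      simp [← pow_card_mul_prod, hc.1, Nat.mul_div_cancel' hdvd, hn]
    · simp only [coe_filter, Set.mem_ofPred_eq] at hd
      exact funext fun i ↦ Nat.mul_div_cancel' (hd.2 i)
  · refine Finset.card_eq_zero.mpr (filter_eq_empty_iff.mpr fun d hd hdiv ↦ hdvd ?_)
    rw [← prod_eq_of_mem_finMulAntidiag hd, ← Fin.prod_const]
    exact prod_dvd_prod_of_dvd _ _ fun i _ ↦ hdiv i

end Nat

lemma LSeriesHasSum_card_finMulAntidiag (k : ℕ) {s : ℂ} (hs : 1 < s.re) :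
    LSeriesHasSum (fun n ↦ (#(Nat.finMulAntidiag k n) : ℂ)) s (riemannZeta s ^ k) := by
  induction k with
  | zero => simpa [Nat.card_finMulAntidiag_zero_eq_delta] using LSeriesHasSum_delta s
  | succ k ih =>
    refine (LSeriesHasSum_congr s _ fun _ ↦ ?_).mpr (ih.convolution (LSeriesHasSum_one hs))
    simp [convolution_def, Nat.card_finMulAntidiag_succ]

lemma piltzTuples_eq_finMulAntidiag {k : ℕ} (hk : k ≠ 0) (n : ℕ) :
    piltzTuples k n = Nat.finMulAntidiag k n := by
  rcases eq_or_ne n 0 with rfl | hn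
  · have : Nonempty (Fin k) := ⟨⟨0, Nat.pos_of_ne_zero hk⟩⟩
    ext
    simp [piltzTuples]
  · rw [Nat.finMulAntidiag_eq_piFinset_divisors_filter dvd_rfl hn]
    rfl

lemma fgkNat_id_eq_sum_totient {k : ℕ} (hk : k ≠ 0) (n : ℕ) :
    fgkNat (fun m ↦ m) k n
      = ∑ e ∈ n.divisors, φ e * #{d ∈ Nat.finMulAntidiag k n | ∀ i, e ∣ d i} := by
  have hgcd : ∀ d ∈ Nat.finMulAntidiag k n,
      univ.gcd d = ∑ e ∈ n.divisors, if ∀ i, e ∣ d i then φ e else 0 := fun d hd ↦ by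
    have hn := (Nat.mem_finMulAntidiag.mp hd).2
    have hdvd : univ.gcd d ∣ n := (gcd_dvd (mem_univ ⟨0, Nat.pos_of_ne_zero hk⟩)).trans
      (Nat.dvd_of_mem_finMulAntidiag hd _)
    rw [← Nat.sum_totient (univ.gcd d), ← Nat.divisors_filter_dvd_of_dvd hn hdvd, sum_filter]
    simp [Finset.dvd_gcd_iff]
  rw [fgkNat, piltzTuples_eq_finMulAntidiag hk, sum_congr rfl hgcd, sum_comm]
  simp only [← sum_filter, sum_const, smul_eq_mul, mul_comm]

lemma fgkNat_id_eq_convolution {k : ℕ} (hk : k ≠ 0) (n : ℕ) :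
    (fgkNat (fun m ↦ m) k n : ℂ)
      = (extend (· ^ k) (fun e ↦ (φ e : ℂ)) 0 ⍟ fun m ↦ (#(Nat.finMulAntidiag k m) : ℂ)) n := by
  rcases eq_or_ne n 0 with rfl | hn
  · simp [fgkNat, piltzTuples_eq_finMulAntidiag hk]
  have hinj := Nat.pow_left_injective hk
  have hsub : {e ∈ n.divisors | e ^ k ∣ n}.image (· ^ k) ⊆ n.divisors := fun a ha ↦ by
    obtain ⟨e, he, rfl⟩ := mem_image.mp ha
    exact Nat.mem_divisors.mpr ⟨(mem_filter.mp he).2, hn⟩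
  rw [fgkNat_id_eq_sum_totient hk, convolution_def]
  dsimp only
  rw [Nat.sum_divisorsAntidiagonal
      (fun a b ↦ extend (· ^ k) (fun e ↦ (φ e : ℂ)) 0 a * (#(Nat.finMulAntidiag k b) : ℂ))]
  symm
  rw [← sum_subset hsub fun a ha hnot ↦ ?_, sum_image hinj.injOn, sum_filter]
  · push_cast
    refine sum_congr rfl fun e he ↦ ?_
    rw [Nat.card_filter_dvd_finMulAntidiag (Nat.pos_of_mem_divisors he).ne', hinj.extend_apply]
    split_ifs <;> simp
  · have hnot_pow : ¬∃ e, e ^ k = a := by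
      rintro ⟨e, rfl⟩
      have he : e ∣ n := (dvd_pow_self e hk).trans (Nat.dvd_of_mem_divisors ha)
      exact hnot (mem_image_of_mem _ (mem_filter.mpr
        ⟨Nat.mem_divisors.mpr ⟨he, hn⟩, Nat.dvd_of_mem_divisors ha⟩))
    rw [extend_apply' _ _ _ hnot_pow, Pi.zero_apply, zero_mul]

theorem stmt9 (k : ℕ) (hk : 2 ≤ k) (s : ℝ) (hs : 1 < s) :
    HasSum (fun n : ℕ => (fgkNat (fun m => m) k n : ℂ) / (n : ℂ) ^ (s : ℂ))
      (riemannZeta s ^ k * riemannZeta ((k : ℂ) * (s : ℂ) - 1) / riemannZeta ((k : ℂ) * s)) := by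
  have hk0 : k ≠ 0 := by omega
  have hs1 : 1 < (s : ℂ).re := by simpa using hs
  have hks : 2 < ((k : ℂ) * s).re := by
    have hk2 : (2 : ℝ) ≤ k := by exact_mod_cast hk
    rw [← Complex.ofReal_natCast, ← Complex.ofReal_mul, Complex.ofReal_re]
    nlinarith
  have hL := ((LSeriesHasSum_totient hks).extend_pow hk0).convolution
    (LSeriesHasSum_card_finMulAntidiag k hs1)
  rw [← funext (fgkNat_id_eq_convolution hk0), LSeriesHasSum] at hL
  convert hL using 1
  · funext n
    rcases eq_or_ne n 0 with rfl | hn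
    · simp [fgkNat, piltzTuples_eq_finMulAntidiag hk0]
    · rw [term_of_ne_zero hn]
  · ring
end
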